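/- arXiv:2104.13878 — 6 statements merged into one kernel-verified Lean document; each statement's English description precedes it below -/
import Mathlib

section
/- Suppose (x̂, ŷ) is an optimal solution of the augmented ε-constraint model MOP(ε), i.e., x̂ ∈ X, ŷ_i ≥ 0 and f_i(x̂) + ŷ_i = ε_i for i = 2,…,p, and f_1(x̂) − Σ_{i=2}^p β_i ŷ_i ≤ f_1(x) − Σ_{i=2}^p β_i y_i holds for every pair (x, y) with x ∈ X, y_i ≥ 0 and f_i(x) + y_i = ε_i for i = 2,…,p. If β_i > 0 for all i ∈ {2,…,p}, then x̂ is an efficient solution of MOP. -/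
/-- An optimal solution of the augmented ε-constraint model MOP(ε) with strictly
positive slack weights β is an efficient solution of the multiobjective problem MOP. -/
theorem augmented_eps_constraint_optimal_is_efficient
    {α : Type*} (p : ℕ) (hp : 2 ≤ p) (X : Set α) (hX : X.Nonempty)
    (f : ℕ → α → ℝ) (ε β : ℕ → ℝ)
    (hβ : ∀ i ∈ Finset.Icc 2 p, 0 < β i)
    (xh : α) (yh : ℕ → ℝ) (hxh : xh ∈ X)
    (hyhnn : ∀ i ∈ Finset.Icc 2 p, 0 ≤ yh i)
    (hyheq : ∀ i ∈ Finset.Icc 2 p, f i xh + yh i = ε i)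
    (hopt : ∀ x ∈ X, ∀ y : ℕ → ℝ,
      (∀ i ∈ Finset.Icc 2 p, 0 ≤ y i) →
      (∀ i ∈ Finset.Icc 2 p, f i x + y i = ε i) →
      f 1 xh - ∑ i ∈ Finset.Icc 2 p, β i * yh i ≤
        f 1 x - ∑ i ∈ Finset.Icc 2 p, β i * y i) :
    ¬ ∃ x' ∈ X, (∀ i ∈ Finset.Icc 1 p, f i x' ≤ f i xh) ∧
        ∃ j ∈ Finset.Icc 1 p, f j x' < f j xh := by
  rintro ⟨x', hx', hle, j, hj, hjlt⟩
  -- define slack for x'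
  set y' : ℕ → ℝ := fun i => ε i - f i x' with hy'
  have hsub : Finset.Icc 2 p ⊆ Finset.Icc 1 p := by
    apply Finset.Icc_subset_Icc_left; omega
  have hge : ∀ i ∈ Finset.Icc 2 p, yh i ≤ y' i := by
    intro i hi
    have h1 := hyheq i hi
    have h2 := hle i (hsub hi)
    simp only [hy']
    linarith
  have hnn : ∀ i ∈ Finset.Icc 2 p, 0 ≤ y' i := by
    intro i hi
    exact le_trans (hyhnn i hi) (hge i hi)
  have heq : ∀ i ∈ Finset.Icc 2 p, f i x' + y' i = ε i := by
    intro i hi; simp [hy']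
  have key := hopt x' hx' y' hnn heq
  have h1mem : (1 : ℕ) ∈ Finset.Icc 1 p := by
    simp; omega
  have hf1 : f 1 x' ≤ f 1 xh := hle 1 h1mem
  have hsumle : ∑ i ∈ Finset.Icc 2 p, β i * yh i ≤
      ∑ i ∈ Finset.Icc 2 p, β i * y' i := by
    apply Finset.sum_le_sum
    intro i hi
    exact mul_le_mul_of_nonneg_left (hge i hi) (hβ i hi).le
  -- hence equality everywhere
  have hf1eq : f 1 x' = f 1 xh := le_antisymm hf1 (by linarith)
  have hsumeq : ∑ i ∈ Finset.Icc 2 p, β i * yh i =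
      ∑ i ∈ Finset.Icc 2 p, β i * y' i := le_antisymm hsumle (by linarith)
  -- the strict index j
  rcases Finset.mem_Icc.mp hj with ⟨hj1, hjp⟩
  by_cases hj1' : j = 1
  · rw [hj1'] at hjlt; linarith
  · have hjmem : j ∈ Finset.Icc 2 p := by
      simp only [Finset.mem_Icc]; omega
    have hstrict : ∑ i ∈ Finset.Icc 2 p, β i * yh i <
        ∑ i ∈ Finset.Icc 2 p, β i * y' i := by
      apply Finset.sum_lt_sum (fun i hi =>
        mul_le_mul_of_nonneg_left (hge i hi) (hβ i hi).le)
      refine ⟨j, hjmem, ?_⟩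
      apply mul_lt_mul_of_pos_left _ (hβ j hjmem)
      have := hyheq j hjmem
      simp only [hy']
      linarith
    linarith
end

section
/- The total beam-on time is bounded below as max_{t∈T} [ D_t · Cov_t / (Gmax_t · |S|) ] ≤ Σ_{θ∈I} b_θ. -/
/-- The total beam-on time is bounded below as
max_{t∈T} [ D_t · Cov_t / (Gmax_t · |S|) ] ≤ Σ_{θ∈I} b_θ. -/
theorem bot_lower_bound_multi_tumor
    {τ α ι σ κ : Type*}
    (T : Finset τ) (hT : T.Nonempty)
    (I : Finset ι) (hI : I.Nonempty)
    (S : Finset σ) (hS : S.Nonempty)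
    (K : Finset κ) (hK : K.Nonempty)
    (g : ι → σ → κ → ℝ)
    (hg : ∀ θ ∈ I, ∀ s ∈ S, ∀ k ∈ K, 0 ≤ g θ s k)
    (b : ι → ℝ) (hb0 : ∀ θ ∈ I, 0 ≤ b θ)
    (hb : ∀ θ ∈ I, ∀ s ∈ S, ∑ k ∈ K, g θ s k ≤ b θ)
    (V : τ → Finset α) (hV : ∀ t ∈ T, (V t).Nonempty)
    (D : τ → ℝ) (hD : ∀ t ∈ T, 0 ≤ D t)
    (G : τ → α → ι → σ → κ → ℝ)
    (hG : ∀ t ∈ T, ∀ v ∈ V t, ∀ θ ∈ I, ∀ s ∈ S, ∀ k ∈ K, 0 ≤ G t v θ s k)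
    (d : τ → α → ℝ)
    (hd : ∀ t ∈ T, ∀ v ∈ V t,
      d t v = ∑ θ ∈ I, ∑ s ∈ S, ∑ k ∈ K, G t v θ s k * g θ s k)
    (Cov : τ → ℝ)
    (hCov : ∀ t ∈ T,
      Cov t = (((V t).filter (fun v => D t ≤ d t v)).card : ℝ) / ((V t).card : ℝ))
    (Gmax : τ → ℝ)
    (hGmaxUB : ∀ t ∈ T, ∀ v ∈ V t, ∀ θ ∈ I, ∀ s ∈ S, ∀ k ∈ K, G t v θ s k ≤ Gmax t)
    (hGmaxAtt : ∀ t ∈ T, ∃ v ∈ V t, ∃ θ ∈ I, ∃ s ∈ S, ∃ k ∈ K, G t v θ s k = Gmax t)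
    (hGmaxPos : ∀ t ∈ T, 0 < Gmax t) :
    T.sup' hT (fun t => D t * Cov t / (Gmax t * (S.card : ℝ))) ≤ ∑ θ ∈ I, b θ := by
  apply Finset.sup'_le
  intro t ht
  have hSpos : (0:ℝ) < (S.card : ℝ) := by
    exact_mod_cast Finset.card_pos.mpr hS
  have hden : (0:ℝ) < Gmax t * (S.card : ℝ) := mul_pos (hGmaxPos t ht) hSpos
  have hbsum : (0:ℝ) ≤ ∑ θ ∈ I, b θ := Finset.sum_nonneg (fun θ hθ => hb0 θ hθ)
  rw [div_le_iff₀ hden]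
  have hCov0 : 0 ≤ Cov t := by
    rw [hCov t ht]
    positivity
  have hCov1 : Cov t ≤ 1 := by
    rw [hCov t ht]
    have hVpos : (0:ℝ) < ((V t).card : ℝ) := by
      exact_mod_cast Finset.card_pos.mpr (hV t ht)
    rw [div_le_one hVpos]
    exact_mod_cast Finset.card_filter_le _ _
  rcases Finset.eq_empty_or_nonempty ((V t).filter (fun v => D t ≤ d t v)) with hemp | ⟨v, hv⟩
  · have : Cov t = 0 := by rw [hCov t ht, hemp]; simp
    rw [this, mul_zero]
    exact mul_nonneg hbsum hden.le
  · rw [Finset.mem_filter] at hv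
    obtain ⟨hvV, hDd⟩ := hv
    have key : D t ≤ (∑ θ ∈ I, b θ) * (Gmax t * (S.card : ℝ)) := by
      refine hDd.trans ?_
      rw [hd t ht v hvV]
      have step1 : ∑ θ ∈ I, ∑ s ∈ S, ∑ k ∈ K, G t v θ s k * g θ s k
          ≤ ∑ θ ∈ I, ∑ s ∈ S, ∑ k ∈ K, Gmax t * g θ s k := by
        refine Finset.sum_le_sum (fun θ hθ => Finset.sum_le_sum (fun s hs =>
          Finset.sum_le_sum (fun k hk => ?_)))
        exact mul_le_mul_of_nonneg_right (hGmaxUB t ht v hvV θ hθ s hs k hk)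
          (hg θ hθ s hs k hk)
      refine step1.trans ?_
      have step2 : ∑ θ ∈ I, ∑ s ∈ S, ∑ k ∈ K, Gmax t * g θ s k
          = Gmax t * ∑ θ ∈ I, ∑ s ∈ S, ∑ k ∈ K, g θ s k := by
        simp [Finset.mul_sum]
      rw [step2]
      have step3 : ∑ θ ∈ I, ∑ s ∈ S, ∑ k ∈ K, g θ s k ≤ ∑ θ ∈ I, ∑ _s ∈ S, b θ := by
        refine Finset.sum_le_sum (fun θ hθ => Finset.sum_le_sum (fun s hs => hb θ hθ s hs))
      have step4 : ∑ θ ∈ I, ∑ _s ∈ S, b θ = (S.card : ℝ) * ∑ θ ∈ I, b θ := by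
        simp [Finset.sum_const, Finset.sum_mul, mul_comm]
      calc Gmax t * ∑ θ ∈ I, ∑ s ∈ S, ∑ k ∈ K, g θ s k
          ≤ Gmax t * ((S.card : ℝ) * ∑ θ ∈ I, b θ) := by
            rw [← step4]; exact mul_le_mul_of_nonneg_left step3 (hGmaxPos t ht).le
        _ = (∑ θ ∈ I, b θ) * (Gmax t * (S.card : ℝ)) := by ring
    calc D t * Cov t ≤ D t * 1 := mul_le_mul_of_nonneg_left hCov1 (hD t ht)
      _ = D t := mul_one _
      _ ≤ _ := key
end

section
/- Let (x̂, ŷ) be an optimal solution of the linear program LP(ε¹), let N = {i ∈ {2,…,p} : ŷ_i > 0} be the (nonempty) index set of nonbinding ε-constraints at (x̂, ŷ), and write z_i = c_i · x̂ for i ∈ {1,…,p}. Suppose ε² ∈ ℝ^{p−1} satisfies z_i ≤ ε²_i for all i ∈ N and ε²_k = ε¹_k for all k ∈ {2,…,p} \ N. Then the pair (x̂, y²) with y²_i = ε²_i − c_i · x̂ for i = 2,…,p is an optimal solution of LP(ε²); in particular, the objective vector z = (c_1·x̂, …, c_p·x̂) is attained by an optimal solution of LP(ε²). -/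
/-- Identifying repeating solutions for the augmented ε-constraint linear program:
if `(xh, yh)` is optimal for `LP(ε¹)`, `N` is the nonempty index set of nonbinding
ε-constraints, and `ε²` satisfies `c_i · xh ≤ ε²_i` for `i ∈ N` and `ε²_k = ε¹_k`
otherwise, then `(xh, y²)` with `y²_i = ε²_i − c_i · xh` is optimal for `LP(ε²)`. -/
theorem repeating_solutions_lp
    (n m p : ℕ) (hp : 2 ≤ p)
    (A : Matrix (Fin m) (Fin n) ℝ) (b : Fin m → ℝ)
    (c : ℕ → (Fin n → ℝ))
    (β : ℕ → ℝ) (hβ : ∀ i ∈ Finset.Icc 2 p, 0 < β i)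
    (ε1 ε2 : ℕ → ℝ)
    (xh : Fin n → ℝ) (yh : ℕ → ℝ)
    (hxhX : ∀ j, A.mulVec xh j ≤ b j)
    (hyhnn : ∀ i ∈ Finset.Icc 2 p, 0 ≤ yh i)
    (hyheq : ∀ i ∈ Finset.Icc 2 p, (∑ j, c i j * xh j) + yh i = ε1 i)
    (hopt : ∀ x : Fin n → ℝ, ∀ y : ℕ → ℝ,
      (∀ j, A.mulVec x j ≤ b j) →
      (∀ i ∈ Finset.Icc 2 p, 0 ≤ y i) →
      (∀ i ∈ Finset.Icc 2 p, (∑ j, c i j * x j) + y i = ε1 i) →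
      (∑ j, c 1 j * xh j) - ∑ i ∈ Finset.Icc 2 p, β i * yh i ≤
        (∑ j, c 1 j * x j) - ∑ i ∈ Finset.Icc 2 p, β i * y i)
    (N : Finset ℕ) (hN : N = (Finset.Icc 2 p).filter (fun i => 0 < yh i))
    (hNne : N.Nonempty)
    (z : ℕ → ℝ) (hz : ∀ i ∈ Finset.Icc 1 p, z i = ∑ j, c i j * xh j)
    (hε2N : ∀ i ∈ N, z i ≤ ε2 i)
    (hε2rest : ∀ k ∈ Finset.Icc 2 p, k ∉ N → ε2 k = ε1 k)
    (y2 : ℕ → ℝ) (hy2 : ∀ i ∈ Finset.Icc 2 p, y2 i = ε2 i - ∑ j, c i j * xh j) :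
    (∀ i ∈ Finset.Icc 2 p, 0 ≤ y2 i) ∧
    (∀ i ∈ Finset.Icc 2 p, (∑ j, c i j * xh j) + y2 i = ε2 i) ∧
    (∀ x : Fin n → ℝ, ∀ y : ℕ → ℝ,
      (∀ j, A.mulVec x j ≤ b j) →
      (∀ i ∈ Finset.Icc 2 p, 0 ≤ y i) →
      (∀ i ∈ Finset.Icc 2 p, (∑ j, c i j * x j) + y i = ε2 i) →
      (∑ j, c 1 j * xh j) - ∑ i ∈ Finset.Icc 2 p, β i * y2 i ≤
        (∑ j, c 1 j * x j) - ∑ i ∈ Finset.Icc 2 p, β i * y i) := by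
  have hsub : ∀ i ∈ Finset.Icc 2 p, i ∈ Finset.Icc 1 p := by
    intro i hi
    simp only [Finset.mem_Icc] at hi ⊢
    omega
  have hNsub : ∀ i ∈ N, i ∈ Finset.Icc 2 p := by
    intro i hi; rw [hN] at hi; exact (Finset.mem_filter.mp hi).1
  -- difference between y2 and yh
  have hdiff : ∀ i ∈ Finset.Icc 2 p, y2 i = yh i + (ε2 i - ε1 i) := by
    intro i hi
    have h1 := hy2 i hi
    have h2 := hyheq i hi
    linarith
  have hnn2 : ∀ i ∈ Finset.Icc 2 p, 0 ≤ y2 i := by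
    intro i hi
    by_cases hiN : i ∈ N
    · have h1 := hε2N i hiN
      have h2 := hz i (hsub i hi)
      have h3 := hy2 i hi
      linarith
    · have hε := hε2rest i hi hiN
      have := hyhnn i hi
      rw [hdiff i hi, hε]
      linarith
  refine ⟨hnn2, ?_, ?_⟩
  · intro i hi
    rw [hy2 i hi]; ring
  -- optimality
  intro x y hxX hynn hyeq
  -- shifted slack
  set y' : ℕ → ℝ := fun i => y i + (ε1 i - ε2 i) with hy'
  have hy'eq : ∀ i ∈ Finset.Icc 2 p, (∑ j, c i j * x j) + y' i = ε1 i := by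
    intro i hi
    have := hyeq i hi
    simp only [hy']
    linarith
  have hy'nnrest : ∀ i ∈ Finset.Icc 2 p, i ∉ N → 0 ≤ y' i := by
    intro i hi hiN
    have hε := hε2rest i hi hiN
    have := hynn i hi
    simp only [hy', hε]
    linarith
  -- the minimum positive slack
  set δ : ℝ := N.inf' hNne yh with hδdef
  have hδpos : 0 < δ := by
    rw [hδdef, Finset.lt_inf'_iff]
    intro i hi
    rw [hN] at hi
    exact (Finset.mem_filter.mp hi).2
  have hδle : ∀ i ∈ N, δ ≤ yh i := fun i hi => Finset.inf'_le _ hi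
  set K : ℝ := δ + ∑ i ∈ N, |y' i - yh i| with hKdef
  have hsumabs : 0 ≤ ∑ i ∈ N, |y' i - yh i| :=
    Finset.sum_nonneg fun i _ => abs_nonneg _
  have hKpos : 0 < K := by rw [hKdef]; linarith
  set t : ℝ := δ / K with htdef
  have ht0 : 0 < t := div_pos hδpos hKpos
  have ht1 : t ≤ 1 := by
    rw [htdef, div_le_one hKpos, hKdef]; linarith
  have habsK : ∀ i ∈ N, |y' i - yh i| ≤ K := by
    intro i hi
    have := Finset.single_le_sum (f := fun i => |y' i - yh i|)
      (fun i _ => abs_nonneg _) hi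
    rw [hKdef]; linarith
  -- convex combination
  set xt : Fin n → ℝ := fun j => (1 - t) * xh j + t * x j with hxt
  set yt : ℕ → ℝ := fun i => (1 - t) * yh i + t * y' i with hyt
  have hclin : ∀ i : ℕ, (∑ j, c i j * xt j)
      = (1 - t) * (∑ j, c i j * xh j) + t * (∑ j, c i j * x j) := by
    intro i
    rw [Finset.mul_sum, Finset.mul_sum, ← Finset.sum_add_distrib]
    refine Finset.sum_congr rfl fun j _ => ?_
    simp only [hxt]; ring
  have hxtX : ∀ j, A.mulVec xt j ≤ b j := by
    intro j
    have hlin : A.mulVec xt j = (1 - t) * A.mulVec xh j + t * A.mulVec x j := by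
      simp only [Matrix.mulVec, dotProduct]
      rw [Finset.mul_sum, Finset.mul_sum, ← Finset.sum_add_distrib]
      refine Finset.sum_congr rfl fun k _ => ?_
      simp only [hxt]; ring
    have h1 := hxhX j
    have h2 := hxX j
    nlinarith [hxhX j, hxX j]
  have hytnn : ∀ i ∈ Finset.Icc 2 p, 0 ≤ yt i := by
    intro i hi
    by_cases hiN : i ∈ N
    · have h1 := hδle i hiN
      have h2 := habsK i hiN
      have h3 : t * (yh i - y' i) ≤ t * |y' i - yh i| := by
        have : yh i - y' i ≤ |y' i - yh i| := by
          rw [abs_sub_comm]; exact le_abs_self _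
        exact mul_le_mul_of_nonneg_left this ht0.le
      have h4 : t * |y' i - yh i| ≤ δ := by
        rw [htdef]
        rw [div_mul_eq_mul_div, div_le_iff₀ hKpos] at *
        nlinarith [abs_nonneg (y' i - yh i)]
      simp only [hyt]
      nlinarith
    · have h1 := hyhnn i hi
      have h2 := hy'nnrest i hi hiN
      simp only [hyt]
      nlinarith
  have hyteq : ∀ i ∈ Finset.Icc 2 p, (∑ j, c i j * xt j) + yt i = ε1 i := by
    intro i hi
    rw [hclin i]
    have h1 := hyheq i hi
    have h2 := hy'eq i hi
    simp only [hyt]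
    nlinarith
  have hβlin : (∑ i ∈ Finset.Icc 2 p, β i * yt i)
      = (1 - t) * (∑ i ∈ Finset.Icc 2 p, β i * yh i)
        + t * (∑ i ∈ Finset.Icc 2 p, β i * y' i) := by
    rw [Finset.mul_sum, Finset.mul_sum, ← Finset.sum_add_distrib]
    refine Finset.sum_congr rfl fun i _ => ?_
    simp only [hyt]; ring
  have hkey := hopt xt yt hxtX hytnn hyteq
  rw [hclin 1, hβlin] at hkey
  -- conclude: val1(xh,yh) ≤ val1(x,y')
  have hmain : (∑ j, c 1 j * xh j) - ∑ i ∈ Finset.Icc 2 p, β i * yh i ≤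
      (∑ j, c 1 j * x j) - ∑ i ∈ Finset.Icc 2 p, β i * y' i := by
    nlinarith [hkey, ht0]
  -- relate the two objective sums
  have hS2 : (∑ i ∈ Finset.Icc 2 p, β i * y2 i)
      = (∑ i ∈ Finset.Icc 2 p, β i * yh i)
        + ∑ i ∈ Finset.Icc 2 p, β i * (ε2 i - ε1 i) := by
    rw [← Finset.sum_add_distrib]
    refine Finset.sum_congr rfl fun i hi => ?_
    rw [hdiff i hi]; ring
  have hS' : (∑ i ∈ Finset.Icc 2 p, β i * y' i)
      = (∑ i ∈ Finset.Icc 2 p, β i * y i)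
        - ∑ i ∈ Finset.Icc 2 p, β i * (ε2 i - ε1 i) := by
    rw [← Finset.sum_sub_distrib]
    refine Finset.sum_congr rfl fun i hi => ?_
    simp only [hy']; ring
  rw [hS'] at hmain
  rw [hS2]
  linarith
end

section
/- Suppose (x̂, ŷ) is an optimal solution of MOP(ε¹), and ε² ∈ ℝ^{p−1} satisfies f_i(x̂) ≤ ε²_i ≤ ε¹_i for all i ∈ {2,…,p}. Then the pair (x̂, y²) with y²_i = ε²_i − f_i(x̂) is an optimal solution of MOP(ε²); in particular, the objective vector (f_1(x̂), …, f_p(x̂)) is attained by an optimal solution of MOP(ε²). -/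
/-- If `(xh, yh)` is optimal for `MOP(ε¹)` and `ε²` satisfies
`f_i(xh) ≤ ε²_i ≤ ε¹_i` for all `i ∈ {2,…,p}`, then `(xh, y²)` with
`y²_i = ε²_i − f_i(xh)` is an optimal solution of `MOP(ε²)`. -/
theorem repeating_solutions_general
    {α : Type*} (p : ℕ) (hp : 2 ≤ p) (X : Set α) (hX : X.Nonempty)
    (f : ℕ → α → ℝ) (ε1 ε2 β : ℕ → ℝ)
    (hβ : ∀ i ∈ Finset.Icc 2 p, 0 < β i)
    (xh : α) (yh : ℕ → ℝ) (hxh : xh ∈ X)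
    (hyhnn : ∀ i ∈ Finset.Icc 2 p, 0 ≤ yh i)
    (hyheq : ∀ i ∈ Finset.Icc 2 p, f i xh + yh i = ε1 i)
    (hopt : ∀ x ∈ X, ∀ y : ℕ → ℝ,
      (∀ i ∈ Finset.Icc 2 p, 0 ≤ y i) →
      (∀ i ∈ Finset.Icc 2 p, f i x + y i = ε1 i) →
      f 1 xh - ∑ i ∈ Finset.Icc 2 p, β i * yh i ≤
        f 1 x - ∑ i ∈ Finset.Icc 2 p, β i * y i)
    (hε2lb : ∀ i ∈ Finset.Icc 2 p, f i xh ≤ ε2 i)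
    (hε2ub : ∀ i ∈ Finset.Icc 2 p, ε2 i ≤ ε1 i)
    (y2 : ℕ → ℝ) (hy2 : ∀ i ∈ Finset.Icc 2 p, y2 i = ε2 i - f i xh) :
    (∀ i ∈ Finset.Icc 2 p, 0 ≤ y2 i) ∧
    (∀ i ∈ Finset.Icc 2 p, f i xh + y2 i = ε2 i) ∧
    (∀ x ∈ X, ∀ y : ℕ → ℝ,
      (∀ i ∈ Finset.Icc 2 p, 0 ≤ y i) →
      (∀ i ∈ Finset.Icc 2 p, f i x + y i = ε2 i) →
      f 1 xh - ∑ i ∈ Finset.Icc 2 p, β i * y2 i ≤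
        f 1 x - ∑ i ∈ Finset.Icc 2 p, β i * y i) := by

  refine ⟨?_, ?_, ?_⟩
  · intro i hi
    rw [hy2 i hi]
    linarith [hε2lb i hi]
  · intro i hi
    rw [hy2 i hi]; ring
  · intro x hx y hynn hyeq
    set y' : ℕ → ℝ := fun i => y i + (ε1 i - ε2 i) with hy'
    have h1 : ∀ i ∈ Finset.Icc 2 p, 0 ≤ y' i := by
      intro i hi
      have := hynn i hi
      have := hε2ub i hi
      simp only [hy']
      linarith
    have h2 : ∀ i ∈ Finset.Icc 2 p, f i x + y' i = ε1 i := by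
      intro i hi
      have := hyeq i hi
      simp only [hy']
      linarith
    have key := hopt x hx y' h1 h2
    have hsum : ∑ i ∈ Finset.Icc 2 p, β i * y' i
        = (∑ i ∈ Finset.Icc 2 p, β i * y i)
          + ∑ i ∈ Finset.Icc 2 p, β i * (ε1 i - ε2 i) := by
      rw [← Finset.sum_add_distrib]
      apply Finset.sum_congr rfl
      intro i hi; simp only [hy']; ring
    have hsum2 : ∑ i ∈ Finset.Icc 2 p, β i * yh i
        = (∑ i ∈ Finset.Icc 2 p, β i * y2 i)
          + ∑ i ∈ Finset.Icc 2 p, β i * (ε1 i - ε2 i) := by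
      rw [← Finset.sum_add_distrib]
      apply Finset.sum_congr rfl
      intro i hi
      have h3 : yh i = ε1 i - f i xh := by linarith [hyheq i hi]
      rw [h3, hy2 i hi]; ring
    linarith
end

section
/- Let w_1, …, w_p ≥ 0 with Σ_{i=1}^p w_i = 1, and suppose x̂ ∈ X is the unique optimal solution of the weighted-sum problem P(w), i.e., Σ_{i=1}^p w_i f_i(x̂) < Σ_{i=1}^p w_i f_i(x) for every x ∈ X with x ≠ x̂. Then for every k ∈ {1,…,p}, x̂ is an optimal solution of the ε-constraint model with primary objective f_k and bounds ε_i = f_i(x̂) for all i ≠ k; that is, for every k and every x ∈ X with f_i(x) ≤ f_i(x̂) for all i ≠ k, one has f_k(x̂) ≤ f_k(x). -/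
/-- If `xh` is the unique optimal solution of the weighted-sum problem `P(w)`, then
for every `k ∈ {1,…,p}`, `xh` is an optimal solution of the ε-constraint model with
primary objective `f k` and bounds `ε_i = f_i(xh)` for all `i ≠ k`. -/
theorem unique_weighted_sum_optimal_is_eps_constraint_optimal_all
    {α : Type*} (p : ℕ) (hp : 2 ≤ p) (X : Set α) (hX : X.Nonempty)
    (f : ℕ → α → ℝ) (w : ℕ → ℝ)
    (hw : ∀ i ∈ Finset.Icc 1 p, 0 ≤ w i)
    (hw1 : ∑ i ∈ Finset.Icc 1 p, w i = 1)
    (xh : α) (hxh : xh ∈ X)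
    (huniq : ∀ x ∈ X, x ≠ xh →
      ∑ i ∈ Finset.Icc 1 p, w i * f i xh < ∑ i ∈ Finset.Icc 1 p, w i * f i x) :
    ∀ k ∈ Finset.Icc 1 p, ∀ x ∈ X,
      (∀ i ∈ Finset.Icc 1 p, i ≠ k → f i x ≤ f i xh) → f k xh ≤ f k x := by
  intro k hk x hx hfeas
  by_contra h
  push_neg at h
  rcases eq_or_ne x xh with rfl | hne
  · exact absurd rfl (ne_of_lt h)
  · have hlt := huniq x hx hne
    have hle : ∑ i ∈ Finset.Icc 1 p, w i * f i x ≤ ∑ i ∈ Finset.Icc 1 p, w i * f i xh := by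
      apply Finset.sum_le_sum
      intro i hi
      rcases eq_or_ne i k with rfl | hik
      · exact mul_le_mul_of_nonneg_left h.le (hw i hi)
      · exact mul_le_mul_of_nonneg_left (hfeas i hi hik) (hw i hi)
    linarith
end

section
/- Let X ⊆ ℝ^n be a nonempty convex set and let f_1, …, f_p : ℝ^n → ℝ be functions that are convex on X. Suppose x̂ ∈ X is an optimal solution of the ε-constraint model with primary objective f_k and bounds ε_i = f_i(x̂) for all i ≠ k, i.e., f_k(x̂) ≤ f_k(x) for every x ∈ X with f_i(x) ≤ f_i(x̂) for all i ≠ k. Then there exist weights w_1, …, w_p ≥ 0 with Σ_{i=1}^p w_i = 1 such that x̂ is an optimal solution of the weighted-sum problem P(w), i.e., Σ_{i=1}^p w_i f_i(x̂) ≤ Σ_{i=1}^p w_i f_i(x) for every x ∈ X. -/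
/-- In the convex case, an optimal solution of the ε-constraint model with primary
objective `f k` and bounds `ε_i = f_i(xh)` (`i ≠ k`) is an optimal solution of the
weighted-sum problem `P(w)` for some nonnegative weights summing to one. -/
theorem eps_constraint_optimal_is_weighted_sum_optimal_convex
    (p n : ℕ) (hp : 2 ≤ p) (hn : 1 ≤ n)
    (X : Set (Fin n → ℝ)) (hXne : X.Nonempty) (hXconv : Convex ℝ X)
    (f : ℕ → (Fin n → ℝ) → ℝ)
    (hfconv : ∀ i ∈ Finset.Icc 1 p, ConvexOn ℝ X (f i))
    (xh : Fin n → ℝ) (hxh : xh ∈ X)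
    (k : ℕ) (hk : k ∈ Finset.Icc 1 p)
    (hopt : ∀ x ∈ X, (∀ i ∈ Finset.Icc 1 p, i ≠ k → f i x ≤ f i xh) → f k xh ≤ f k x) :
    ∃ w : ℕ → ℝ, (∀ i ∈ Finset.Icc 1 p, 0 ≤ w i) ∧
      (∑ i ∈ Finset.Icc 1 p, w i = 1) ∧
      (∀ x ∈ X, ∑ i ∈ Finset.Icc 1 p, w i * f i xh ≤
        ∑ i ∈ Finset.Icc 1 p, w i * f i x) := by
  classical
  obtain ⟨k1, kp⟩ := Finset.mem_Icc.mp hk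
  -- objective values at xh, indexed by Fin p
  set F : Fin p → ℝ := fun j => f (j.1 + 1) xh with hF
  have hconv : ∀ j : Fin p, ConvexOn ℝ X (f (j.1 + 1)) := fun j =>
    hfconv _ (Finset.mem_Icc.mpr ⟨by omega, by omega⟩)
  -- the two sets to separate
  set S : Set (Fin p → ℝ) := {y | ∀ j, y j < F j} with hSdef
  set T : Set (Fin p → ℝ) := {y | ∃ x ∈ X, ∀ j, f (j.1 + 1) x ≤ y j} with hTdef
  have hSopen : IsOpen S := by
    have : S = ⋂ j : Fin p, {y : Fin p → ℝ | y j < F j} := by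
      ext y; simp [hSdef, Set.mem_iInter]
    rw [this]
    exact isOpen_iInter_of_finite fun j =>
      isOpen_lt (continuous_apply j) continuous_const
  have hSconv : Convex ℝ S := by
    have : S = ⋂ j : Fin p, {y : Fin p → ℝ | y j < F j} := by
      ext y; simp [hSdef, Set.mem_iInter]
    rw [this]
    exact convex_iInter fun j =>
      convex_halfSpace_lt ⟨fun a b => rfl, fun c a => rfl⟩ (F j)
  have hTconv : Convex ℝ T := by
    rintro y ⟨x, hx, hxy⟩ y' ⟨x', hx', hxy'⟩ a b ha hb hab
    refine ⟨a • x + b • x', hXconv hx hx' ha hb hab, fun j => ?_⟩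
    calc f (j.1 + 1) (a • x + b • x')
        ≤ a * f (j.1 + 1) x + b * f (j.1 + 1) x' := (hconv j).2 hx hx' ha hb hab
      _ ≤ a * y j + b * y' j := by
          have := hxy j; have := hxy' j; nlinarith [hxy j, hxy' j]
  have hdisj : Disjoint S T := by
    rw [Set.disjoint_left]
    rintro y hyS ⟨x, hx, hxy⟩
    have hlt : ∀ j : Fin p, f (j.1 + 1) x < f (j.1 + 1) xh := fun j =>
      lt_of_le_of_lt (hxy j) (hyS j)
    have hall : ∀ i ∈ Finset.Icc 1 p, f i x < f i xh := by
      intro i hi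
      obtain ⟨h1, h2⟩ := Finset.mem_Icc.mp hi
      have := hlt ⟨i - 1, by omega⟩
      simpa [Nat.sub_add_cancel h1] using this
    have := hopt x hx (fun i hi _ => (hall i hi).le)
    exact absurd (hall k hk) (not_lt.mpr this)
  obtain ⟨φ, u, hSu, hTu⟩ := geometric_hahn_banach_open hSconv hSopen hTconv hdisj
  set c : Fin p → ℝ := fun j => φ (Pi.single j 1) with hc
  have hφ : ∀ y : Fin p → ℝ, φ y = ∑ j, y j * c j := by
    intro y
    conv_lhs => rw [← Finset.univ_sum_single y]
    rw [map_sum]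
    refine Finset.sum_congr rfl fun j _ => ?_
    have : (Pi.single j (y j) : Fin p → ℝ) = y j • (Pi.single j 1 : Fin p → ℝ) := by
      rw [← Pi.single_smul, smul_eq_mul, mul_one]
    rw [this, map_smul]; simp [hc]
  -- membership facts
  have hFT : F ∈ T := ⟨xh, hxh, fun j => le_refl _⟩
  have hFS : ∀ ε : ℝ, 0 < ε → (F - ε • (1 : Fin p → ℝ)) ∈ S := by
    intro ε hε j
    simp only [Pi.sub_apply, Pi.smul_apply, Pi.one_apply, smul_eq_mul, mul_one]
    linarith
  -- nonnegativity of c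
  have hcnn : ∀ j : Fin p, 0 ≤ c j := by
    intro j
    by_contra hneg
    push_neg at hneg
    have h1 : φ (F - (1 : ℝ) • (1 : Fin p → ℝ)) < u := hSu _ (hFS 1 one_pos)
    set t : ℝ := (u - φ (F - (1 : ℝ) • (1 : Fin p → ℝ)) + 1) / (-c j) with ht
    have htpos : 0 < t := by
      apply div_pos; linarith; linarith
    have hmem : (F - (1 : ℝ) • (1 : Fin p → ℝ)) - t • (Pi.single j 1 : Fin p → ℝ) ∈ S := by
      intro i
      simp only [Pi.sub_apply, Pi.smul_apply, Pi.one_apply, smul_eq_mul, mul_one]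
      have : 0 ≤ t * (Pi.single j 1 : Fin p → ℝ) i := by
        rcases eq_or_ne i j with h | h
        · subst h; simp; linarith
        · simp [Pi.single_apply, h]
      linarith
    have h2 : φ ((F - (1 : ℝ) • (1 : Fin p → ℝ)) - t • (Pi.single j 1 : Fin p → ℝ)) < u := hSu _ hmem
    rw [map_sub, map_smul] at h2
    have hcj : φ (Pi.single j 1) = c j := rfl
    rw [hcj] at h2
    have hne : -c j ≠ 0 := by linarith
    have : t * (-c j) = u - φ (F - (1 : ℝ) • (1 : Fin p → ℝ)) + 1 := by
      rw [ht, div_mul_cancel₀ _ hne]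
    simp only [smul_eq_mul] at h2
    nlinarith
  -- positivity of the sum s
  set s : ℝ := ∑ j, c j with hs
  have hone : φ (1 : Fin p → ℝ) = s := by rw [hφ]; simp [hs]
  have hspos : 0 < s := by
    have h1 : φ (F - (1 : ℝ) • (1 : Fin p → ℝ)) < u := hSu _ (hFS 1 one_pos)
    have h2 : u ≤ φ F := hTu _ hFT
    rw [map_sub, map_smul, hone] at h1
    simp only [smul_eq_mul, one_mul] at h1
    linarith
  -- φ F ≤ u
  have hFu : φ F ≤ u := by
    by_contra hgt
    push_neg at hgt
    have hε : 0 < (φ F - u) / s := div_pos (by linarith) hspos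
    have := hSu _ (hFS _ hε)
    rw [map_sub, map_smul, hone] at this
    simp only [smul_eq_mul] at this
    have : φ F - (φ F - u) / s * s < u := this
    rw [div_mul_cancel₀ _ (ne_of_gt hspos)] at this
    linarith
  -- reindexing lemma
  have himg : Finset.Icc 1 p = Finset.image (fun j : Fin p => j.1 + 1) Finset.univ := by
    ext i
    simp only [Finset.mem_Icc, Finset.mem_image, Finset.mem_univ, true_and]
    constructor
    · rintro ⟨h1, h2⟩; exact ⟨⟨i - 1, by omega⟩, by show i - 1 + 1 = i; omega⟩
    · rintro ⟨j, rfl⟩; exact ⟨by omega, by have := j.2; omega⟩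
  have hreindex : ∀ g : ℕ → ℝ, ∑ i ∈ Finset.Icc 1 p, g i = ∑ j : Fin p, g (j.1 + 1) := by
    intro g
    rw [himg, Finset.sum_image]
    intro a _ b _ h
    exact Fin.ext (Nat.add_right_cancel h)
  -- define weights
  set w : ℕ → ℝ := fun i => if h : 1 ≤ i ∧ i ≤ p then c ⟨i - 1, by omega⟩ / s else 0
    with hw
  have hwval : ∀ j : Fin p, w (j.1 + 1) = c j / s := by
    intro j
    have hcond : 1 ≤ j.1 + 1 ∧ j.1 + 1 ≤ p := ⟨by omega, by have := j.2; omega⟩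
    show (if h : 1 ≤ j.1 + 1 ∧ j.1 + 1 ≤ p then c ⟨j.1 + 1 - 1, by omega⟩ / s else 0)
      = c j / s
    rw [dif_pos hcond]
    congr 2
  refine ⟨w, ?_, ?_, ?_⟩
  · intro i hi
    obtain ⟨h1, h2⟩ := Finset.mem_Icc.mp hi
    have : w i = c ⟨i - 1, by omega⟩ / s := by
      show (if h : 1 ≤ i ∧ i ≤ p then c ⟨i - 1, by omega⟩ / s else 0) = _
      rw [dif_pos ⟨h1, h2⟩]
    rw [this]
    exact div_nonneg (hcnn _) hspos.le
  · rw [hreindex]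
    rw [Finset.sum_congr rfl (fun j _ => hwval j), ← Finset.sum_div]
    exact div_self (ne_of_gt hspos)
  · intro x hx
    have hxT : (fun j : Fin p => f (j.1 + 1) x) ∈ T := ⟨x, hx, fun j => le_refl _⟩
    have key : φ F ≤ φ (fun j : Fin p => f (j.1 + 1) x) := le_trans hFu (hTu _ hxT)
    rw [hφ, hφ] at key
    rw [hreindex, hreindex]
    have h1 : ∀ (y : Fin n → ℝ), ∑ j : Fin p, w (j.1 + 1) * f (j.1 + 1) y
        = (∑ j : Fin p, f (j.1 + 1) y * c j) / s := by
      intro y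
      rw [Finset.sum_div]
      refine Finset.sum_congr rfl fun j _ => ?_
      rw [hwval j]; ring
    rw [h1, h1]
    gcongr
end
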